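/- There are no primes p, q and positive integers a, b with C(p^a, 4) - C(q^b, 2) = 1. -/
import Mathlib

private lemma choose4' (c : ℕ) : (c+4).choose 4 * 24 = (c+4)*(c+3)*(c+2)*(c+1) := by
  have h := Nat.descFactorial_eq_factorial_mul_choose (c+4) 4
  simp [Nat.descFactorial, Nat.factorial] at h
  ring_nf at h ⊢
  omega

private lemma choose2' (m : ℕ) : (m+2).choose 2 * 2 = (m+2)*(m+1) := by
  have h := Nat.descFactorial_eq_factorial_mul_choose (m+2) 2
  simp [Nat.descFactorial, Nat.factorial] at h
  ring_nf at h ⊢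
  omega

private lemma div_lemma (q b A : ℕ) (hq : q.Prime) (hA : 0 < A) (hdvd : q^b ∣ A * (A+10)) :
    q ^ b ∣ A ∨ q ^ b ∣ (A + 10) ∨ (q ∣ 10 ∧ (q^(b-1) ∣ A ∨ q^(b-1) ∣ (A+10))) := by
  have hA' : A ≠ 0 := hA.ne'
  have hB' : A + 10 ≠ 0 := by omega
  set α := A.factorization q with hα
  set β := (A+10).factorization q with hβ
  have h1 : b ≤ α + β := by
    have := (Nat.Prime.pow_dvd_iff_le_factorization hq (by positivity)).1 hdvd
    rwa [Nat.factorization_mul hA' hB', Finsupp.add_apply] at this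
  have hdA : q ^ α ∣ A := Nat.ordProj_dvd A q
  have hdB : q ^ β ∣ A + 10 := Nat.ordProj_dvd (A+10) q
  have hmin : q ^ (min α β) ∣ 10 := by
    have d1 : q ^ (min α β) ∣ A := dvd_trans (pow_dvd_pow q (min_le_left _ _)) hdA
    have d2 : q ^ (min α β) ∣ A + 10 := dvd_trans (pow_dvd_pow q (min_le_right _ _)) hdB
    have := Nat.dvd_sub d2 d1
    simpa using this
  have hq2 : 2 ≤ q := hq.two_le
  have hmin1 : min α β ≤ 1 := by
    by_contra hContra
    push_neg at hContra
    have : q ^ 2 ∣ 10 := dvd_trans (pow_dvd_pow q (by omega)) hmin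
    have hle : q ^ 2 ≤ 10 := Nat.le_of_dvd (by norm_num) this
    have hq3 : q ≤ 3 := by nlinarith
    interval_cases q <;> revert this <;> decide
  rcases le_or_gt b α with h | h
  · exact Or.inl (dvd_trans (pow_dvd_pow q h) hdA)
  rcases le_or_gt b β with h' | h'
  · exact Or.inr (Or.inl (dvd_trans (pow_dvd_pow q h') hdB))
  · right; right
    have hmin0 : 1 ≤ min α β := by omega
    constructor
    · have : q ^ 1 ∣ 10 := dvd_trans (pow_dvd_pow q hmin0) hmin
      simpa using this
    · rcases le_or_gt (b-1) α with h2 | h2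
      · exact Or.inl (dvd_trans (pow_dvd_pow q h2) hdA)
      · exact Or.inr (dvd_trans (pow_dvd_pow q (by omega)) hdB)

private lemma sideA (s d k c m : ℕ) (hs : s = 1 ∨ s = 2 ∨ s = 5) (hd : 2 ≤ d) (hc : 1 ≤ c)
    (hm : m = s*d) (hA : c*(c+5) = d*k)
    (hkey : (c*(c+5))*(c*(c+5)+10) + 12*m = 12*(m*m)) : False := by
  subst hm
  rw [hA] at hkey
  -- cancel d
  have h2 : d * (k*(d*k+10) + 12*s) = d * (12*(s*s)*d) := by
    calc d * (k*(d*k+10) + 12*s) = (d*k)*(d*k+10) + 12*(s*d) := by ring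
    _ = 12*((s*d)*(s*d)) := hkey
    _ = d * (12*(s*s)*d) := by ring
  have hE : k*(d*k+10) + 12*s = 12*(s*s)*d := Nat.eq_of_mul_eq_mul_left (by omega) h2
  have hd0 : 0 < d := by omega
  rcases hs with rfl | rfl | rfl
  · have hk : k ≤ 3 := by
      by_contra hk4
      push_neg at hk4
      have t1 : 4*d ≤ k*d := Nat.mul_le_mul_right d (by omega)
      have t2 : 4*(k*d) ≤ k*(k*d) := Nat.mul_le_mul_right (k*d) (by omega)
      nlinarith [hE, t1, t2]
    interval_cases k <;>
      first
        | omega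
        | (have hc20 : c ≤ 20 := by nlinarith [hA, hE]
           interval_cases c <;> omega)
  · have hk : k ≤ 6 := by
      by_contra hk7
      push_neg at hk7
      have t1 : 7*d ≤ k*d := Nat.mul_le_mul_right d (by omega)
      have t2 : 7*(k*d) ≤ k*(k*d) := Nat.mul_le_mul_right (k*d) (by omega)
      nlinarith [hE, t1, t2]
    interval_cases k <;>
      first
        | omega
        | (have hc20 : c ≤ 20 := by nlinarith [hA, hE]
           interval_cases c <;> omega)
  · have hk : k ≤ 17 := by
      by_contra hk18
      push_neg at hk18
      have t1 : 18*d ≤ k*d := Nat.mul_le_mul_right d (by omega)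
      have t2 : 18*(k*d) ≤ k*(k*d) := Nat.mul_le_mul_right (k*d) (by omega)
      nlinarith [hE, t1, t2]
    interval_cases k <;>
      first
        | omega
        | (have hc20 : c ≤ 20 := by nlinarith [hA, hE]
           interval_cases c <;> omega)

private lemma sideB (s d k c m : ℕ) (hs : s = 1 ∨ s = 2 ∨ s = 5) (hd : 2 ≤ d) (hc : 1 ≤ c)
    (hm : m = s*d) (hB : c*(c+5) + 10 = d*k)
    (hkey : (c*(c+5))*(c*(c+5)+10) + 12*m = 12*(m*m)) : False := by
  subst hm
  -- (A+10)^2 + 12m = 12 m^2 + 10(A+10)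
  have hkey2 : (d*k)*(d*k) + 12*(s*d) = 12*((s*d)*(s*d)) + 10*(d*k) := by
    have r : (c*(c+5)+10)*(c*(c+5)+10) = (c*(c+5))*(c*(c+5)+10) + 10*(c*(c+5)+10) := by ring
    rw [← hB]
    omega
  have h2 : d * (k*(d*k) + 12*s) = d * (12*(s*s)*d + 10*k) := by
    calc d * (k*(d*k) + 12*s) = (d*k)*(d*k) + 12*(s*d) := by ring
    _ = 12*((s*d)*(s*d)) + 10*(d*k) := hkey2
    _ = d * (12*(s*s)*d + 10*k) := by ring
  have hE : k*(d*k) + 12*s = 12*(s*s)*d + 10*k := Nat.eq_of_mul_eq_mul_left (by omega) h2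
  have hd0 : 0 < d := by omega
  rcases hs with rfl | rfl | rfl
  · have hk : k ≤ 6 := by
      by_contra hk7
      push_neg at hk7
      have t1 : 7*d ≤ k*d := Nat.mul_le_mul_right d (by omega)
      have t2 : 2*k ≤ d*k := Nat.mul_le_mul_right k (by omega)
      have t3 : 7*(k*d) ≤ k*(k*d) := Nat.mul_le_mul_right (k*d) (by omega)
      nlinarith [hE, t1, t2, t3]
    interval_cases k <;>
      first
        | omega
        | (have hc20 : c ≤ 20 := by nlinarith [hB, hE]
           interval_cases c <;> omega)
  · have hk : k ≤ 9 := by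
      by_contra hk10
      push_neg at hk10
      have t1 : 10*d ≤ k*d := Nat.mul_le_mul_right d (by omega)
      have t2 : 2*k ≤ d*k := Nat.mul_le_mul_right k (by omega)
      have t3 : 10*(k*d) ≤ k*(k*d) := Nat.mul_le_mul_right (k*d) (by omega)
      nlinarith [hE, t1, t2, t3]
    interval_cases k <;>
      first
        | omega
        | (have hc20 : c ≤ 20 := by nlinarith [hB, hE]
           interval_cases c <;> omega)
  · have hk : k ≤ 19 := by
      by_contra hk20
      push_neg at hk20
      have t1 : 20*d ≤ k*d := Nat.mul_le_mul_right d (by omega)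
      have t2 : 2*k ≤ d*k := Nat.mul_le_mul_right k (by omega)
      have t3 : 20*(k*d) ≤ k*(k*d) := Nat.mul_le_mul_right (k*d) (by omega)
      nlinarith [hE, t1, t2, t3]
    interval_cases k <;>
      first
        | omega
        | (have hc20 : c ≤ 20 := by nlinarith [hB, hE]
           interval_cases c <;> omega)

private lemma smallm (c m : ℕ) (hc : 1 ≤ c) (hm2 : 2 ≤ m) (hm5 : m ≤ 5)
    (hkey : (c*(c+5))*(c*(c+5)+10) + 12*m = 12*(m*m)) : False := by
  have hc2 : c ≤ 2 := by
    by_contra hc3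
    push_neg at hc3
    have h1 : 24 ≤ c*(c+5) := by nlinarith
    have h2 : m*m ≤ 25 := Nat.mul_le_mul hm5 hm5
    have h3 : 24*34 ≤ (c*(c+5))*(c*(c+5)+10) := Nat.mul_le_mul h1 (by omega)
    omega
  interval_cases c <;> interval_cases m <;> omega

theorem stmt_10 : ¬ ∃ (p q a b : ℕ), p.Prime ∧ q.Prime ∧ 0 < a ∧ 0 < b ∧
    (p ^ a).choose 4 = (q ^ b).choose 2 + 1 := by
  rintro ⟨p, q, a, b, hp, hq, ha, hb, h⟩
  have hm2 : 2 ≤ q ^ b := Nat.one_lt_pow hb.ne' hq.one_lt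
  obtain ⟨e, he⟩ : ∃ e, q ^ b = e + 2 := ⟨q ^ b - 2, by omega⟩
  have hn4 : 4 ≤ p ^ a := by
    by_contra h4
    push_neg at h4
    rw [Nat.choose_eq_zero_of_lt h4] at h
    omega
  obtain ⟨c, hcn⟩ : ∃ c, p ^ a = c + 4 := ⟨p ^ a - 4, by omega⟩
  rw [hcn, he] at h
  have e1 := choose4' c
  have e2 := choose2' e
  have e3 : (c+4)*(c+3)*(c+2)*(c+1) = 12*((e+2)*(e+1)) + 24 := by linarith [e1, e2, h]
  have r1 : c*(c+5)*(c*(c+5)+10) + 24 = (c+4)*(c+3)*(c+2)*(c+1) := by ring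
  have hkey : (c*(c+5))*(c*(c+5)+10) + 12*(e+2) = 12*((e+2)*(e+2)) := by
    have r2 : 12*((e+2)*(e+1)) + 12*(e+2) = 12*((e+2)*(e+2)) := by ring
    omega
  have hc1 : 1 ≤ c := by
    by_contra hc0
    push_neg at hc0
    interval_cases c
    nlinarith [hkey]
  have hprod : (c*(c+5))*(c*(c+5)+10) = (e+2) * (12*(e+1)) := by
    have : (e+2)*(12*(e+1)) + 12*(e+2) = 12*((e+2)*(e+2)) := by ring
    omega
  have hdvd : q ^ b ∣ (c*(c+5)) * (c*(c+5)+10) := by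
    rw [hprod, he]
    exact Dvd.intro _ rfl
  have hA0 : 0 < c*(c+5) := by positivity
  rcases div_lemma q b (c*(c+5)) hq hA0 hdvd with hd1 | hd2 | ⟨hq10, hd3⟩
  · obtain ⟨k, hk⟩ := hd1
    rw [he] at hk
    exact sideA 1 (e+2) k c (e+2) (Or.inl rfl) (by omega) hc1 (by ring) hk hkey
  · obtain ⟨k, hk⟩ := hd2
    rw [he] at hk
    exact sideB 1 (e+2) k c (e+2) (Or.inl rfl) (by omega) hc1 (by ring) hk hkey
  · have hq25 : q = 2 ∨ q = 5 := by
      have h1 := hq.two_le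
      have h2 : q ≤ 10 := Nat.le_of_dvd (by norm_num) hq10
      interval_cases q <;> revert hq10 hq <;> decide
    rcases Nat.lt_or_ge b 2 with hb1 | hb2
    · -- b = 1, m = q ≤ 5
      have hb1' : b = 1 := by omega
      have hm5 : e + 2 ≤ 5 := by
        rw [← he, hb1', pow_one]
        rcases hq25 with rfl | rfl <;> norm_num
      exact smallm c (e+2) hc1 (by omega) hm5 hkey
    · set d := q ^ (b-1) with hdd
      have hqd : q * d = e + 2 := by
        rw [← he, hdd, ← pow_succ']
        congr 1
        omega
      have hd2' : 2 ≤ d := by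
        calc 2 ≤ q := hq.two_le
        _ ≤ q ^ (b-1) := Nat.le_self_pow (by omega) q
      have hm : e + 2 = q * d := hqd.symm
      rcases hd3 with hda | hdb
      · obtain ⟨k, hk⟩ := hda
        exact sideA q d k c (e+2) (by tauto) hd2' hc1 hm hk hkey
      · obtain ⟨k, hk⟩ := hdb
        exact sideB q d k c (e+2) (by tauto) hd2' hc1 hm hk hkey
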